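/- arXiv:0803.1869 — 3 statements merged into one kernel-verified Lean document; each statement's English description precedes it below -/
import Mathlib

section
/- Fix masses m_1, m_2, … > 0, spring constants k_1, k_2, … and dashpot constants c_1, c_2, …, and set b_i(z) = z·c_i + k_i. Define polynomials inductively by P_1(z) = z², D_0(z) = 1, D_j(z) = P_j(z) + (b_j(z)/m_j)·D_{j−1}(z) for j ≥ 1, and P_j(z) = (z² + b_{j−1}(z)/m_j)·P_{j−1}(z) + z²·(b_{j−1}(z)/m_{j−1})·D_{j−2}(z) for j ≥ 2. Then for every k ≥ 1, D_k(z) = det(z²·I_k + z·C_k + K_k + W_k), where W_k is the k×k matrix whose only nonzero entry is (z·c_k + k_k)/m_k in position (k,k). -/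
/-! The matrix `z²I + zC_K + K_K + W_K` is the leading `K × K` block of the semi-infinite
tridiagonal matrix `z²I + zC + K` of the unterminated chain: `W_K` restores exactly the term
`b_K/m_K` that the convention `x_K = 0` removes from the last diagonal entry. Expanding the
determinant of a leading block of a tridiagonal matrix along its last row gives the three-term
recurrence `Δ_{n+2} = a_{n+1} Δ_{n+1} - u_n l_n Δ_n`; eliminating `P` from the definition shows that
`D_n` satisfies the same recurrence, with `u_n l_n = b_n² / (m_n m_{n+1})`, and the same initial
values. -/

open Polynomial

/-- The `N × N` tridiagonal matrix `X(x_1, …, x_{N−1})` of the spring–dashpot–mass chain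
(0-based indexing: `ms i` is the mass `m_{i+1}` and `xs i` is the parameter `x_{i+1}`):
diagonal entries `(x_{i−1} + x_i)/m_i` (with the convention `x_0 = x_N = 0`),
superdiagonal entries `−x_i/m_i` and subdiagonal entries `−x_i/m_{i+1}`. -/
noncomputable def chainX (N : ℕ) (ms xs : ℕ → ℝ) : Matrix (Fin N) (Fin N) ℝ :=
  Matrix.of fun i j =>
    if i = j then
      ((if (i : ℕ) = 0 then 0 else xs ((i : ℕ) - 1)) +
        (if (i : ℕ) = N - 1 then 0 else xs (i : ℕ))) / ms (i : ℕ)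
    else if (j : ℕ) = (i : ℕ) + 1 then -xs (i : ℕ) / ms (i : ℕ)
    else if (i : ℕ) = (j : ℕ) + 1 then -xs (j : ℕ) / ms (i : ℕ)
    else 0

/-- The pair `(P_n, D_n)` of polynomials of Theorem 4.1, defined inductively by
`P_1(z) = z²`, `D_0(z) = 1`, `D_j = P_j + (b_j/m_j)·D_{j−1}` for `j ≥ 1`, and
`P_j = (z² + b_{j−1}/m_j)·P_{j−1} + z²·(b_{j−1}/m_{j−1})·D_{j−2}` for `j ≥ 2`, where
`b_i(z) = z·c_i + k_i` (0-based data: `ms i = m_{i+1}`, `ks i = k_{i+1}`, `cs i = c_{i+1}`,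
so `b_{i+1}(z)` is `X·C(cs i) + C(ks i)`; the unused value `P_0` is set to `0`). -/
noncomputable def chainPD (ms ks cs : ℕ → ℝ) : ℕ → Polynomial ℝ × Polynomial ℝ
  | 0 => (0, 1)
  | 1 =>
    (Polynomial.X ^ 2,
      Polynomial.X ^ 2 +
        Polynomial.C (1 / ms 0) * (Polynomial.X * Polynomial.C (cs 0) + Polynomial.C (ks 0)) * 1)
  | (n + 2) =>
    let b : ℕ → Polynomial ℝ := fun i => Polynomial.X * Polynomial.C (cs i) + Polynomial.C (ks i)
    let P : Polynomial ℝ :=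
      (Polynomial.X ^ 2 + Polynomial.C (1 / ms (n + 1)) * b n) * (chainPD ms ks cs (n + 1)).1 +
        Polynomial.X ^ 2 * Polynomial.C (1 / ms n) * b n * (chainPD ms ks cs n).2
    (P, P + Polynomial.C (1 / ms (n + 1)) * b (n + 1) * (chainPD ms ks cs (n + 1)).2)

/-- The `k × k` matrix `W_k` whose only nonzero entry is `(z·c_k + k_k)/m_k` in position
`(k, k)` (0-based data: `ms i = m_{i+1}`, etc.). -/
noncomputable def chainW (K : ℕ) (ms ks cs : ℕ → ℝ) : Matrix (Fin K) (Fin K) (Polynomial ℝ) :=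
  Matrix.of fun i j =>
    if (i : ℕ) = K - 1 ∧ (j : ℕ) = K - 1 then
      Polynomial.C (1 / ms (K - 1)) *
        (Polynomial.X * Polynomial.C (cs (K - 1)) + Polynomial.C (ks (K - 1)))
    else 0


namespace Matrix

variable {R : Type*}

def IsTridiagonal [Zero R] (M : Matrix ℕ ℕ R) : Prop :=
  ∀ i j, i + 1 < j → M i j = 0 ∧ M j i = 0

def leadingBlock (M : Matrix ℕ ℕ R) (n : ℕ) : Matrix (Fin n) (Fin n) R :=
  M.submatrix Fin.val Fin.val

@[simp]
theorem leadingBlock_apply (M : Matrix ℕ ℕ R) {n : ℕ} (i j : Fin n) :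
    M.leadingBlock n i j = M i j := rfl

variable [CommRing R]

theorem det_succ_of_castSucc_last_eq_zero {n : ℕ} (A : Matrix (Fin (n + 1)) (Fin (n + 1)) R)
    (h : ∀ i : Fin n, A i.castSucc (Fin.last n) = 0) :
    A.det = A (Fin.last n) (Fin.last n) * (A.submatrix Fin.castSucc Fin.castSucc).det := by
  rw [det_succ_column A (Fin.last n), Fin.sum_univ_castSucc,
    Finset.sum_eq_zero fun i _ => by rw [h i, mul_zero, zero_mul], zero_add, Fin.succAbove_last,
    Fin.val_last, ← two_mul, pow_mul, neg_one_sq, one_pow, one_mul]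

theorem IsTridiagonal.det_leadingBlock_add_two {M : Matrix ℕ ℕ R} (hM : M.IsTridiagonal)
    (n : ℕ) :
    (M.leadingBlock (n + 2)).det = M (n + 1) (n + 1) * (M.leadingBlock (n + 1)).det -
      M n (n + 1) * M (n + 1) n * (M.leadingBlock n).det := by
  have hminor : ((M.leadingBlock (n + 2)).submatrix (Fin.last (n + 1)).succAbove
      (Fin.last n).castSucc.succAbove).det = M n (n + 1) * (M.leadingBlock n).det := by
    rw [det_succ_of_castSucc_last_eq_zero]
    · congr 2
      · simp [leadingBlock, Fin.succAbove]
      · ext i j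
        simp [leadingBlock, Fin.succAbove, Fin.lt_def]
    · intro i
      simpa [Fin.succAbove] using (hM i (n + 1) (by omega)).1
  rw [det_succ_row _ (Fin.last (n + 1)), Fin.sum_univ_castSucc, Fin.sum_univ_castSucc,
    Finset.sum_eq_zero, zero_add, hminor, Fin.succAbove_last]
  · have hlast : (M.leadingBlock (n + 2)).submatrix Fin.castSucc Fin.castSucc =
        M.leadingBlock (n + 1) := rfl
    simp only [hlast, leadingBlock_apply, Fin.val_last, Fin.val_castSucc]
    rw [show n + 1 + n = 2 * n + 1 by ring, show n + 1 + (n + 1) = 2 * (n + 1) by ring,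
      pow_succ, pow_mul, pow_mul, neg_one_sq, one_pow]
    ring
  · intro j _
    simp [leadingBlock, (hM j (n + 1) (by omega)).2]

end Matrix

noncomputable def infiniteChainX (ms xs : ℕ → ℝ) : Matrix ℕ ℕ ℝ :=
  Matrix.of fun i j =>
    if i = j then ((if i = 0 then 0 else xs (i - 1)) + xs i) / ms i
    else if j = i + 1 then -xs i / ms i
    else if i = j + 1 then -xs j / ms i
    else 0

theorem chainX_apply (N : ℕ) (ms xs : ℕ → ℝ) (i j : Fin N) :
    chainX N ms xs i j = infiniteChainX ms xs i j -
      if (i : ℕ) = N - 1 ∧ (j : ℕ) = N - 1 then xs (N - 1) / ms (N - 1) else 0 := by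
  simp only [chainX, infiniteChainX, Matrix.of_apply, Fin.ext_iff]
  split_ifs <;> simp_all [add_div]

theorem infiniteChainX_isTridiagonal (ms xs : ℕ → ℝ) : (infiniteChainX ms xs).IsTridiagonal := by
  intro i j hij
  have : i ≠ j ∧ j ≠ i ∧ j ≠ i + 1 ∧ i ≠ j + 1 := by omega
  simp [infiniteChainX, this]

theorem infiniteChainX_apply_self (ms xs : ℕ → ℝ) (i : ℕ) :
    infiniteChainX ms xs i i = ((if i = 0 then 0 else xs (i - 1)) + xs i) / ms i := by
  simp [infiniteChainX]

theorem infiniteChainX_apply_succ (ms xs : ℕ → ℝ) (i : ℕ) :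
    infiniteChainX ms xs i (i + 1) = -xs i / ms i := by
  simp [infiniteChainX]

theorem infiniteChainX_succ_apply (ms xs : ℕ → ℝ) (i : ℕ) :
    infiniteChainX ms xs (i + 1) i = -xs i / ms (i + 1) := by
  simp [infiniteChainX, show i ≠ i + 2 by omega]

noncomputable def chainQuadratic (ms ks cs : ℕ → ℝ) : Matrix ℕ ℕ ℝ[X] :=
  (X : ℝ[X]) ^ 2 • (1 : Matrix ℕ ℕ ℝ[X]) + (X : ℝ[X]) • (infiniteChainX ms cs).map C +
    (infiniteChainX ms ks).map C

theorem chainQuadratic_apply (ms ks cs : ℕ → ℝ) (i j : ℕ) :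
    chainQuadratic ms ks cs i j = (if i = j then X ^ 2 else 0) +
      X * C (infiniteChainX ms cs i j) + C (infiniteChainX ms ks i j) := by
  simp [chainQuadratic, Matrix.one_apply]

theorem chainQuadratic_isTridiagonal (ms ks cs : ℕ → ℝ) :
    (chainQuadratic ms ks cs).IsTridiagonal := by
  intro i j hij
  have hc := infiniteChainX_isTridiagonal ms cs i j hij
  have hk := infiniteChainX_isTridiagonal ms ks i j hij
  have hne : i ≠ j ∧ j ≠ i := ⟨by omega, by omega⟩
  simp [chainQuadratic_apply, hc, hk, hne]

theorem chainQuadratic_leadingBlock (K : ℕ) (ms ks cs : ℕ → ℝ) :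
    (chainQuadratic ms ks cs).leadingBlock K =
      (X : ℝ[X]) ^ 2 • (1 : Matrix (Fin K) (Fin K) ℝ[X]) +
        (X : ℝ[X]) • (chainX K ms cs).map C + (chainX K ms ks).map C + chainW K ms ks cs := by
  ext i j : 1
  simp only [Matrix.leadingBlock_apply, chainQuadratic_apply, Matrix.add_apply,
    Matrix.smul_apply, Matrix.map_apply, Matrix.one_apply, chainX_apply, chainW, Matrix.of_apply,
    Fin.ext_iff, smul_eq_mul]
  split_ifs <;> simp only [map_sub, map_zero, map_mul, map_one, div_eq_mul_inv] <;> ring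

theorem chainPD_fst_succ (ms ks cs : ℕ → ℝ) (n : ℕ) :
    (chainPD ms ks cs (n + 1)).1 =
      (chainPD ms ks cs (n + 1)).2 -
        C (1 / ms n) * (X * C (cs n) + C (ks n)) * (chainPD ms ks cs n).2 := by
  cases n <;> simp [chainPD]

theorem chainPD_snd_add_two (ms ks cs : ℕ → ℝ) (n : ℕ) :
    (chainPD ms ks cs (n + 2)).2 =
      chainQuadratic ms ks cs (n + 1) (n + 1) * (chainPD ms ks cs (n + 1)).2 -
        chainQuadratic ms ks cs n (n + 1) * chainQuadratic ms ks cs (n + 1) n *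
          (chainPD ms ks cs n).2 := by
  simp only [chainPD]
  rw [chainPD_fst_succ]
  simp only [chainQuadratic_apply, infiniteChainX_apply_self, infiniteChainX_apply_succ,
    infiniteChainX_succ_apply, n.succ_ne_self, n.ne_add_one, n.succ_ne_zero, if_true, if_false,
    Nat.add_sub_cancel, div_eq_mul_inv, map_mul, map_add, map_neg, map_one]
  ring

theorem chainPD_snd_eq_det_leadingBlock (ms ks cs : ℕ → ℝ) (n : ℕ) :
    (chainPD ms ks cs n).2 = ((chainQuadratic ms ks cs).leadingBlock n).det := by
  induction n using Nat.twoStepInduction with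
  | zero => simp [chainPD]
  | one =>
    simp only [chainPD, Matrix.det_unique, Fin.default_eq_zero, Matrix.leadingBlock_apply,
      Fin.val_zero, chainQuadratic_apply, infiniteChainX_apply_self, if_true, zero_add,
      div_eq_mul_inv, map_mul, map_one, mul_one]
    ring
  | more n ih₀ ih₁ =>
    rw [(chainQuadratic_isTridiagonal ms ks cs).det_leadingBlock_add_two, ← ih₀, ← ih₁,
      chainPD_snd_add_two]

theorem chainPD_snd_eq_det_general (ms ks cs : ℕ → ℝ)
    (K : ℕ) :
    (chainPD ms ks cs K).2 =
      Matrix.det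
        ((Polynomial.X : Polynomial ℝ) ^ 2 • (1 : Matrix (Fin K) (Fin K) (Polynomial ℝ)) +
          (Polynomial.X : Polynomial ℝ) • (chainX K ms cs).map Polynomial.C +
          (chainX K ms ks).map Polynomial.C +
          chainW K ms ks cs) := by
  rw [← chainQuadratic_leadingBlock, chainPD_snd_eq_det_leadingBlock]

/-- **Theorem 4.1 (identification of the auxiliary determinants).**  For all masses
`m_1, m_2, … > 0`, spring constants `k_1, k_2, …` and dashpot constants `c_1, c_2, …`, the
inductively defined polynomial `D_k` equals `det(z²·I_k + z·C_k + K_k + W_k)`, for every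
`k ≥ 1`. -/
theorem chainPD_snd_eq_det (ms ks cs : ℕ → ℝ) (hm : ∀ i, 0 < ms i)
    (K : ℕ) (hK : 1 ≤ K) :
    (chainPD ms ks cs K).2 =
      Matrix.det
        ((Polynomial.X : Polynomial ℝ) ^ 2 • (1 : Matrix (Fin K) (Fin K) (Polynomial ℝ)) +
          (Polynomial.X : Polynomial ℝ) • (chainX K ms cs).map Polynomial.C +
          (chainX K ms ks).map Polynomial.C +
          chainW K ms ks cs) :=
  chainPD_snd_eq_det_general ms ks cs K
end

section
/- There exist masses m_1, m_2, m_3 > 0, spring constants k_1, k_2 > 0 and dashpot constants c_1, c_2 > 0 with c_1/k_1 ≠ c_2/k_2 such that, for N = 3, the characteristic polynomial P_3(z) = det(z·I_6 − F_3) and the adjoint polynomial Q_3(z) = h_3 · adj(z·I_6 − F_3) · g_3 have a common complex root. In other words, the proportionality condition c_1/k_1 = c_2/k_2 cannot simply be dropped: for some non-proportional parameter choices the no-common-root conclusion fails. -/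
open Polynomial

/-- The `2N × 2N` state matrix `F_N = [[O_N, I_N], [−K_N, −C_N]]` of the chain, where
`K_N = X(k_1, …, k_{N−1})` and `C_N = X(c_1, …, c_{N−1})`. -/
noncomputable def chainF (N : ℕ) (ms ks cs : ℕ → ℝ) :
    Matrix (Fin N ⊕ Fin N) (Fin N ⊕ Fin N) ℝ :=
  Matrix.fromBlocks 0 1 (-(chainX N ms ks)) (-(chainX N ms cs))

/-- The output row vector `h_N` (entry `1` in position `N`, zeros elsewhere), with
polynomial entries. -/
noncomputable def chainH (N : ℕ) : (Fin N ⊕ Fin N) → Polynomial ℝ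
  | Sum.inl i => if (i : ℕ) = N - 1 then 1 else 0
  | Sum.inr _ => 0

/-- The input column vector `g_N` (entry `1/m_1` in position `N+1`, zeros elsewhere), with
polynomial entries. -/
noncomputable def chainG (N : ℕ) (ms : ℕ → ℝ) : (Fin N ⊕ Fin N) → Polynomial ℝ
  | Sum.inl _ => 0
  | Sum.inr i => if (i : ℕ) = 0 then Polynomial.C (1 / ms 0) else 0

/-- The adjoint polynomial `h_N · adj(z·I_{2N} − F_N) · g_N`. -/
noncomputable def adjPoly (N : ℕ) (ms ks cs : ℕ → ℝ) : Polynomial ℝ :=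
  ∑ i, ∑ j, chainH N i * (Matrix.charmatrix (chainF N ms ks cs)).adjugate i j * chainG N ms j


/-!
With unit masses and springs and dashpots `c = (3/2, 1)`, the chain has a damped mode in which
the third mass stays at rest: the displacements `x = (1, -1, 0)` with velocities `-x` form an
eigenvector of `F_3` for the eigenvalue `-1`, because `(C_3 - K_3) x = x`. So `-1` is a root of
`P_3`, and since the kernel vector of `-I - F_3` vanishes in the observed position 3, the whole
row 3 of `adj(-I - F_3)` vanishes; `Q_3(-1)` is a multiple of one of its entries.
-/

open Polynomial Matrix

namespace Matrix

variable {n R : Type*} [Fintype n] [DecidableEq n] [CommRing R]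

theorem map_eval_charmatrix (M : Matrix n n R) (t : R) :
    (charmatrix M).map (eval t) = scalar n t - M := by
  ext i j
  obtain rfl | hij := eq_or_ne i j <;> simp [*]

variable {M : Matrix n n R} {v : n → R} {t : R}

theorem scalar_sub_mulVec_eq_zero_of_mulVec_eq_smul (hMv : M *ᵥ v = t • v) :
    (scalar n t - M) *ᵥ v = 0 := by
  rw [sub_mulVec, hMv, scalar_apply, ← smul_one_eq_diagonal, smul_mulVec, one_mulVec, sub_self]

variable [IsDomain R]

theorem adjugate_apply_eq_zero_of_mulVec_eq_zero {A : Matrix n n R} (hv : v ≠ 0)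
    (hAv : A *ᵥ v = 0) {i : n} (hvi : v i = 0) (j : n) : A.adjugate i j = 0 := by
  rw [adjugate_apply, ← exists_mulVec_eq_zero_iff]
  refine ⟨v, hv, funext fun k => ?_⟩
  obtain rfl | hkj := eq_or_ne k j
  · simp [mulVec, updateRow_self, hvi]
  · simpa [mulVec, updateRow_ne hkj] using congr_fun hAv k

theorem eval_charpoly_eq_zero_of_mulVec_eq_smul (hv : v ≠ 0) (hMv : M *ᵥ v = t • v) :
    M.charpoly.eval t = 0 := by
  rw [eval_charpoly, ← exists_mulVec_eq_zero_iff]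
  exact ⟨v, hv, scalar_sub_mulVec_eq_zero_of_mulVec_eq_smul hMv⟩

theorem eval_adjugate_charmatrix_eq_zero_of_mulVec_eq_smul (hv : v ≠ 0)
    (hMv : M *ᵥ v = t • v) {i : n} (hvi : v i = 0) (j : n) :
    ((charmatrix M).adjugate i j).eval t = 0 := by
  have hmap := congr_fun₂ ((evalRingHom t).map_adjugate (charmatrix M)) i j
  simp only [RingHom.mapMatrix_apply, map_apply, coe_evalRingHom] at hmap
  rw [hmap, map_eval_charmatrix]
  exact adjugate_apply_eq_zero_of_mulVec_eq_zero hv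
    (scalar_sub_mulVec_eq_zero_of_mulVec_eq_smul hMv) hvi j

end Matrix

theorem adjPoly_eq_adjugate_mul (n : ℕ) (ms ks cs : ℕ → ℝ) :
    adjPoly (n + 1) ms ks cs =
      (charmatrix (chainF (n + 1) ms ks cs)).adjugate (Sum.inl (Fin.last n)) (Sum.inr 0) *
        C (1 / ms 0) := by
  have h_last (i : Fin (n + 1)) : (i : ℕ) = n ↔ i = Fin.last n := by
    rw [Fin.ext_iff, Fin.val_last]
  simp [adjPoly, Fintype.sum_sum_type, chainH, chainG, h_last]

noncomputable def exampleDampers : ℕ → ℝ := fun k => if k = 0 then 3 / 2 else 1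

noncomputable def thirdMassAtRestMode : Fin 3 ⊕ Fin 3 → ℝ := Sum.elim ![1, -1, 0] ![-1, 1, 0]

theorem thirdMassAtRestMode_ne_zero : thirdMassAtRestMode ≠ 0 :=
  fun h => by simpa [thirdMassAtRestMode] using congr_fun h (Sum.inl 0)

theorem chainF_mulVec_thirdMassAtRestMode :
    chainF 3 1 1 exampleDampers *ᵥ thirdMassAtRestMode = (-1 : ℝ) • thirdMassAtRestMode := by
  funext i
  obtain i | i := i <;> fin_cases i <;>
    simp [chainF, chainX, exampleDampers, thirdMassAtRestMode, mulVec, dotProduct,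
      Fintype.sum_sum_type, Fin.sum_univ_three] <;> norm_num

/-- **Theorem 5.3.**  There exist masses `m_1, m_2, m_3 > 0`, spring constants
`k_1, k_2 > 0` and dashpot constants `c_1, c_2 > 0` with `c_1/k_1 ≠ c_2/k_2` such that, for
`N = 3`, the characteristic polynomial `P_3(z) = det(z·I_6 − F_3)` and the adjoint
polynomial `Q_3(z) = h_3 · adj(z·I_6 − F_3) · g_3` have a common complex root (0-based:
`ms 0 = m_1`, …, `ks 0 = k_1`, `ks 1 = k_2`, `cs 0 = c_1`, `cs 1 = c_2`). -/
theorem exists_nonproportional_common_root :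
    ∃ ms ks cs : ℕ → ℝ,
      0 < ms 0 ∧ 0 < ms 1 ∧ 0 < ms 2 ∧ 0 < ks 0 ∧ 0 < ks 1 ∧ 0 < cs 0 ∧ 0 < cs 1 ∧
      cs 0 / ks 0 ≠ cs 1 / ks 1 ∧
      ∃ w : ℂ,
        Polynomial.aeval w (Matrix.charpoly (chainF 3 ms ks cs)) = 0 ∧
        Polynomial.aeval w (adjPoly 3 ms ks cs) = 0 := by
  have hP := eval_charpoly_eq_zero_of_mulVec_eq_smul thirdMassAtRestMode_ne_zero
    chainF_mulVec_thirdMassAtRestMode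
  have hQ : (adjPoly 3 1 1 exampleDampers).eval (-1) = 0 := by
    rw [adjPoly_eq_adjugate_mul 2, eval_mul,
      eval_adjugate_charmatrix_eq_zero_of_mulVec_eq_smul thirdMassAtRestMode_ne_zero
        chainF_mulVec_thirdMassAtRestMode (by simp [thirdMassAtRestMode]), zero_mul]
  have h_real_root {p : ℝ[X]} (hp : p.eval (-1) = 0) : aeval (-1 : ℂ) p = 0 := by
    rw [show (-1 : ℂ) = algebraMap ℝ ℂ (-1) by simp, aeval_algebraMap_apply_eq_algebraMap_eval,
      hp, map_zero]
  refine ⟨1, 1, exampleDampers, ?_, ?_, ?_, ?_, ?_, ?_, ?_, ?_,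
    -1, h_real_root hP, h_real_root hQ⟩ <;> norm_num [exampleDampers]
end

section
/- There exist masses m_1, m_2, m_3 > 0, spring constants k_1, k_2 > 0 and dashpot constants c_1, c_2 > 0 with c_1/k_1 ≠ c_2/k_2 such that, for N = 3, the characteristic polynomial P_3(z) = det(z·I_6 − F_3) and the adjoint polynomial Q_3(z) = h_3 · adj(z·I_6 − F_3) · g_3 have no common complex root. In other words, the proportionality condition c_1/k_1 = c_2/k_2 is sufficient but not necessary for the no-common-root conclusion. -/
open Polynomial

/-!
Take unit masses and springs and dashpots `c = (1, 2)`. Expanding the `6 × 6` determinants gives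
`P_3 = X² (X⁴ + 6X³ + 10X² + 9X + 3)` and `Q_3 = (2X + 1)(X + 1)`, and `P_3` vanishes at
neither `-1` nor `-1/2`.
-/

theorem chainX_three (ms xs : ℕ → ℝ) :
    chainX 3 ms xs =
      !![xs 0 / ms 0, -xs 0 / ms 0, 0;
        -xs 0 / ms 1, (xs 0 + xs 1) / ms 1, -xs 1 / ms 1;
        0, -xs 1 / ms 2, xs 1 / ms 2] := by
  ext i j
  fin_cases i <;> fin_cases j <;> simp [chainX]

noncomputable def exMasses : ℕ → ℝ := fun _ => 1

noncomputable def exSprings : ℕ → ℝ := fun _ => 1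

noncomputable def exDashpots : ℕ → ℝ := fun n => if n = 0 then 1 else 2

theorem chainF_ex :
    chainF 3 exMasses exSprings exDashpots =
      Matrix.fromBlocks 0 1 !![-1, 1, 0; 1, -2, 1; 0, 1, -1] !![-1, 1, 0; 1, -3, 2; 0, 2, -2] := by
  rw [chainF, chainX_three, chainX_three]
  congr 1 <;> ext i j <;> fin_cases i <;> fin_cases j <;>
    norm_num [exMasses, exSprings, exDashpots]

noncomputable def exCharmatrix : Matrix (Fin 6) (Fin 6) ℝ[X] :=
  !![X, 0, 0, -1, 0, 0;
    0, X, 0, 0, -1, 0;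
    0, 0, X, 0, 0, -1;
    1, -1, 0, X + 1, -1, 0;
    -1, 2, -1, -1, X + 3, -2;
    0, -1, 1, 0, -2, X + 2]

theorem charmatrix_chainF_ex_submatrix :
    (chainF 3 exMasses exSprings exDashpots).charmatrix.submatrix
      finSumFinEquiv.symm finSumFinEquiv.symm = exCharmatrix := by
  rw [chainF_ex, Matrix.charmatrix_fromBlocks]
  refine Matrix.ext fun i j => ?_
  fin_cases i <;> fin_cases j <;> simp [exCharmatrix, finSumFinEquiv, Fin.addCases, map_ofNat]

theorem det_exCharmatrix :
    exCharmatrix.det = X ^ 2 * (X ^ 4 + 6 * X ^ 3 + 10 * X ^ 2 + 9 * X + 3) := by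
  simp [exCharmatrix, Matrix.det_succ_row_zero, Fin.sum_univ_succ, Fin.succAbove]
  ring

theorem adjugate_exCharmatrix_two_three : exCharmatrix.adjugate 2 3 = (2 * X + 1) * (X + 1) := by
  simp [Matrix.adjugate_apply, exCharmatrix, Matrix.det_succ_row_zero, Fin.sum_univ_succ,
    Fin.succAbove]
  ring

theorem charpoly_chainF_ex :
    (chainF 3 exMasses exSprings exDashpots).charpoly =
      X ^ 2 * (X ^ 4 + 6 * X ^ 3 + 10 * X ^ 2 + 9 * X + 3) := by
  rw [Matrix.charpoly, ← Matrix.det_submatrix_equiv_self finSumFinEquiv.symm,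
    charmatrix_chainF_ex_submatrix, det_exCharmatrix]

theorem adjPoly_ex : adjPoly 3 exMasses exSprings exDashpots = (2 * X + 1) * (X + 1) := by
  have hentry : (chainF 3 exMasses exSprings exDashpots).charmatrix.adjugate
      (Sum.inl 2) (Sum.inr 0) = (2 * X + 1) * (X + 1) := by
    rw [← adjugate_exCharmatrix_two_three, ← charmatrix_chainF_ex_submatrix,
      Matrix.adjugate_submatrix_equiv_self]
    simp [finSumFinEquiv, Fin.addCases]
  simp [adjPoly, Fintype.sum_sum_type, Fin.sum_univ_three, chainH, chainG, exMasses, hentry]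

theorem no_common_root_ex :
    ¬ ∃ w : ℂ, aeval w (X ^ 2 * (X ^ 4 + 6 * X ^ 3 + 10 * X ^ 2 + 9 * X + 3) : ℝ[X]) = 0 ∧
      aeval w ((2 * X + 1) * (X + 1) : ℝ[X]) = 0 := by
  rintro ⟨w, hP, hQ⟩
  simp only [map_mul, map_add, map_pow, map_one, map_ofNat, aeval_X] at hP hQ
  have hw : w = -1 / 2 ∨ w = -1 := by
    rcases mul_eq_zero.mp hQ with h | h
    · exact Or.inl (by linear_combination h / 2)
    · exact Or.inr (by linear_combination h)
  rcases hw with rfl | rfl <;> norm_num at hP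

/-- **Theorem 5.4.**  There exist masses `m_1, m_2, m_3 > 0`, spring constants
`k_1, k_2 > 0` and dashpot constants `c_1, c_2 > 0` with `c_1/k_1 ≠ c_2/k_2` such that, for
`N = 3`, the characteristic polynomial `P_3(z) = det(z·I_6 − F_3)` and the adjoint
polynomial `Q_3(z) = h_3 · adj(z·I_6 − F_3) · g_3` have no common complex root (0-based:
`ms 0 = m_1`, …, `ks 0 = k_1`, `ks 1 = k_2`, `cs 0 = c_1`, `cs 1 = c_2`): the
proportionality condition is sufficient but not necessary. -/
theorem exists_nonproportional_no_common_root :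
    ∃ ms ks cs : ℕ → ℝ,
      0 < ms 0 ∧ 0 < ms 1 ∧ 0 < ms 2 ∧ 0 < ks 0 ∧ 0 < ks 1 ∧ 0 < cs 0 ∧ 0 < cs 1 ∧
      cs 0 / ks 0 ≠ cs 1 / ks 1 ∧
      ¬ ∃ w : ℂ,
          Polynomial.aeval w (Matrix.charpoly (chainF 3 ms ks cs)) = 0 ∧
          Polynomial.aeval w (adjPoly 3 ms ks cs) = 0 := by
  refine ⟨exMasses, exSprings, exDashpots, ?_⟩
  rw [charpoly_chainF_ex, adjPoly_ex]
  refine ⟨?_, ?_, ?_, ?_, ?_, ?_, ?_, ?_, no_common_root_ex⟩ <;>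
    norm_num [exMasses, exSprings, exDashpots]
end
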